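/- A priori bounds of Theorem 3.1 (ii): Let m ≥ 3 be an integer, n = m − 1, and let Γ be a subgroup of the isometry group of Euclidean space ℝⁿ whose orbit space ℝⁿ/Γ is compact. Let 0 ≤ a₁ < a₀, let γ : (a₁,a₀] → ℝ be continuous, and define ζ(a) := −(m−1) ∫_{a₀}^{a} γ(a')/a' da'. Let ρ : (a₁,a₀] × ℝⁿ → ℝ be continuous, everywhere positive, infinitely differentiable on (a₁,a₀) × ℝⁿ, Γ-periodic in the spatial variable for every a, and satisfy a ∂ρ/∂a = −(m−1) γ(a) ρ + ((m−2)/(2a²)) ( (3/2) |∇ρ|²/ρ² − Δρ/ρ ) on (a₁,a₀) × ℝⁿ. Set ρ₀ := ρ(a₀,·) and let ρ₀^{min}, ρ₀^{max} be its infimum and supremum over ℝⁿ. Then for every a ∈ (a₁,a₀] and x ∈ ℝⁿ one has ρ₀^{min} e^{ζ(a)} ≤ ρ(a,x) ≤ ρ₀^{max} e^{ζ(a)}. -/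

import Mathlib

open scoped RealInnerProductSpace

noncomputable section

/-- The Euclidean Laplacian: the sum of the second partial derivatives. -/
def lap {n : ℕ} (f : EuclideanSpace ℝ (Fin n) → ℝ) (x : EuclideanSpace ℝ (Fin n)) : ℝ :=
  ∑ i : Fin n,
    fderiv ℝ (fun y => fderiv ℝ f y (EuclideanSpace.single i 1)) x (EuclideanSpace.single i 1)

/-- The natural action of the isometry group of Euclidean space on Euclidean space. -/
instance isomAction {n : ℕ} :
    MulAction (EuclideanSpace ℝ (Fin n) ≃ᵢ EuclideanSpace ℝ (Fin n))
      (EuclideanSpace ℝ (Fin n)) where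
  smul g x := g x
  one_smul _ := rfl
  mul_smul _ _ _ := rfl

/-!
Put `u a x = ρ a x * exp (-ζ a)`. The equation becomes
`a ∂ₐu = e^{-ζ(a)} (m-2)/(2a²) ((3/2)|∇ρ|²/ρ² - Δρ/ρ)`. At a spatial maximum of `ρ a ·` the
Laplacian is nonpositive, so `u · x` is nondecreasing there; at a spatial minimum the gradient
vanishes and the Laplacian is nonnegative, so `u · x` is nonincreasing. Periodicity and
compactness of `ℝⁿ/Γ` put all spatial values on a fixed compact set `K`, and a maximum principle
run backwards from `a₀` bounds `u a ·` by the extrema of `u a₀ · = ρ₀`.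
-/

open Set Filter Topology

theorem IsOpenMap.exists_isCompact_image_eq_univ {X Y : Type*} [TopologicalSpace X]
    [WeaklyLocallyCompactSpace X] [TopologicalSpace Y] [CompactSpace Y] {f : X → Y}
    (hf : IsOpenMap f) (hsurj : Function.Surjective f) :
    ∃ K : Set X, IsCompact K ∧ f '' K = univ := by
  choose C hC hCx using fun x : X => exists_compact_mem_nhds x
  have hcover : univ ⊆ ⋃ x, f '' interior (C x) := fun y _ => by
    obtain ⟨x, rfl⟩ := hsurj y
    exact mem_iUnion.2 ⟨x, mem_image_of_mem f (mem_interior_iff_mem_nhds.2 (hCx x))⟩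
  obtain ⟨t, ht⟩ :=
    isCompact_univ.elim_finite_subcover _ (fun x => hf _ isOpen_interior) hcover
  refine ⟨⋃ x ∈ t, C x, t.isCompact_biUnion fun x _ => hC x, eq_univ_of_univ_subset ?_⟩
  rw [image_iUnion₂]
  exact ht.trans (iUnion₂_mono fun x _ => image_mono interior_subset)

theorem MulAction.exists_isCompact_forall_exists_smul_mem {G T : Type*} [Group G]
    [MulAction G T] [TopologicalSpace T] [WeaklyLocallyCompactSpace T] [ContinuousConstSMul G T]
    [CompactSpace (Quotient (MulAction.orbitRel G T))] :
    ∃ K : Set T, IsCompact K ∧ ∀ y : T, ∃ g : G, g • y ∈ K := by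
  have hq := MulAction.isOpenQuotientMap_quotientMk (Γ := G) (T := T)
  obtain ⟨K, hK, hKq⟩ := hq.isOpenMap.exists_isCompact_image_eq_univ hq.surjective
  refine ⟨K, hK, fun y => ?_⟩
  obtain ⟨k, hk, hky⟩ := (hKq.symm ▸ mem_univ _ : Quotient.mk _ y ∈ Quotient.mk _ '' K)
  obtain ⟨g, rfl⟩ := MulAction.orbitRel_apply.1 (Quotient.exact hky)
  exact ⟨g, hk⟩

instance isomSubgroup_continuousConstSMul {n : ℕ}
    (Γ : Subgroup (EuclideanSpace ℝ (Fin n) ≃ᵢ EuclideanSpace ℝ (Fin n))) :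
    ContinuousConstSMul Γ (EuclideanSpace ℝ (Fin n)) :=
  ⟨fun g => (g : EuclideanSpace ℝ (Fin n) ≃ᵢ EuclideanSpace ℝ (Fin n)).continuous⟩

theorem HasDerivWithinAt.nonpos_of_isMaxOn_Icc {h : ℝ → ℝ} {L c d : ℝ} (hcd : c < d)
    (hh : HasDerivWithinAt h L (Ici c) c) (hmax : IsMaxOn h (Icc c d) c) : L ≤ 0 := by
  have hcone : d - c ∈ posTangentConeAt (Icc c d) c :=
    sub_mem_posTangentConeAt_of_segment_subset (segment_eq_Icc hcd.le).subset
  have := hmax.localize.hasFDerivWithinAt_nonpos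
    (hh.mono Icc_subset_Ici_self).hasFDerivWithinAt hcone
  rw [ContinuousLinearMap.toSpanSingleton_apply, smul_eq_mul] at this
  exact nonpos_of_mul_nonpos_right this (sub_pos.2 hcd)

theorem IsLocalMax.hasDerivAt_deriv_nonpos {g g' : ℝ → ℝ} {x L : ℝ} (hmax : IsLocalMax g x)
    (hg : ∀ᶠ t in 𝓝 x, HasDerivAt g (g' t) t) (hg' : HasDerivAt g' L x) : L ≤ 0 := by
  by_contra! hL
  have hg'x : g' x = 0 := hmax.hasDerivAt_eq_zero hg.self_of_nhds
  have hslope : ∀ᶠ t in 𝓝[>] x, 0 < slope g' x t :=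
    nhdsWithin_mono _ (fun t ht => ne_of_gt ht)
      (hasDerivAt_iff_tendsto_slope.1 hg' (Ioi_mem_nhds hL))
  obtain ⟨u, hxu, hu⟩ := mem_nhdsGT_iff_exists_Ioo_subset.1
    (hslope.and (nhdsWithin_le_nhds (hg.and hmax)))
  obtain ⟨t, hxt, htu⟩ := exists_between (show x < u from hxu)
  have hderiv : ∀ s ∈ Ioo x t, HasDerivAt g (g' s) s := fun s hs =>
    (hu ⟨hs.1, hs.2.trans htu⟩).2.1
  have hcont : ContinuousOn g (Icc x t) := by
    intro s hs
    rcases eq_or_lt_of_le hs.1 with rfl | hxs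
    · exact hg.self_of_nhds.continuousAt.continuousWithinAt
    · exact (hu ⟨hxs, hs.2.trans_lt htu⟩).2.1.continuousAt.continuousWithinAt
  obtain ⟨s, hs, hs'⟩ := exists_hasDerivAt_eq_slope g g' hxt hcont hderiv
  have hpos : 0 < g' s := pos_of_slope_pos hs.1 (hu ⟨hs.1, hs.2.trans htu⟩).1 hg'x
  have hle : g t ≤ g x := (hu ⟨hxt, htu⟩).2.2
  rw [hs', div_pos_iff_of_pos_right (sub_pos.2 hxt)] at hpos
  linarith

theorem IsLocalMax.fderiv_fderiv_apply_nonpos {E : Type*} [NormedAddCommGroup E]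
    [NormedSpace ℝ E] {f : E → ℝ} (hf : ContDiff ℝ 2 f) {x : E} (hx : IsLocalMax f x) (v : E) :
    fderiv ℝ (fun y => fderiv ℝ f y v) x v ≤ 0 := by
  have hline : ∀ t : ℝ, HasDerivAt (fun s : ℝ => x + s • v) v t := fun t => by
    simpa using ((hasDerivAt_id t).smul_const v).const_add x
  have hline₀ : x + (0 : ℝ) • v = x := by simp
  have hdf : Differentiable ℝ fun y => fderiv ℝ f y v :=
    ((hf.fderiv_right (m := 1) le_rfl).differentiable one_ne_zero).clm_apply
      (differentiable_const v)
  refine IsLocalMax.hasDerivAt_deriv_nonpos (g := fun t => f (x + t • v))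
    (g' := fun t => fderiv ℝ f (x + t • v) v) (x := 0) ?_
    (Eventually.of_forall fun t =>
      ((hf.differentiable two_ne_zero) _).hasFDerivAt.comp_hasDerivAt t (hline t)) ?_
  · exact IsLocalMax.comp_continuous (by rwa [hline₀]) (hline 0).continuousAt
  · have := (hdf (x + (0 : ℝ) • v)).hasFDerivAt.comp_hasDerivAt 0 (hline 0)
    rwa [hline₀] at this

theorem lap_nonpos_of_isLocalMax {n : ℕ} {f : EuclideanSpace ℝ (Fin n) → ℝ}
    (hf : ContDiff ℝ 2 f) {x : EuclideanSpace ℝ (Fin n)} (hx : IsLocalMax f x) :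
    lap f x ≤ 0 :=
  Finset.sum_nonpos fun _ _ => hx.fderiv_fderiv_apply_nonpos hf _

theorem lap_neg {n : ℕ} (f : EuclideanSpace ℝ (Fin n) → ℝ) (x : EuclideanSpace ℝ (Fin n)) :
    lap (fun y => -f y) x = -lap f x := by
  simp [lap]

theorem lap_nonneg_of_isLocalMin {n : ℕ} {f : EuclideanSpace ℝ (Fin n) → ℝ}
    (hf : ContDiff ℝ 2 f) {x : EuclideanSpace ℝ (Fin n)} (hx : IsLocalMin f x) :
    0 ≤ lap f x := by
  simpa [lap_neg] using lap_nonpos_of_isLocalMax hf.neg hx.neg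

section MaximumPrinciple

variable {X : Type*} [TopologicalSpace X] {u : ℝ → X → ℝ} {b a₀ M : ℝ} {K : Set X}

/-- Backward maximum principle: a maximum of `u a y + ε a` over `[b, a₀] × K` at a time `c < a₀`
would have right time derivative at least `ε > 0`. -/
theorem le_of_hasDerivWithinAt_nonneg_of_isMax (hb : b ≤ a₀) (hK : IsCompact K)
    (hu : ContinuousOn (Function.uncurry u) (Icc b a₀ ×ˢ K))
    (hKu : ∀ a ∈ Icc b a₀, ∀ y, ∃ y' ∈ K, u a y' = u a y)
    (hderiv : ∀ c ∈ Ico b a₀, ∀ x, (∀ y, u c y ≤ u c x) →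
      ∃ D, 0 ≤ D ∧ HasDerivWithinAt (u · x) D (Ici c) c)
    (hM : ∀ y, u a₀ y ≤ M) (x : X) : u b x ≤ M := by
  by_contra! hx
  have hba : b < a₀ := lt_of_le_of_ne hb (by rintro rfl; exact (hM x).not_gt hx)
  set ε := (u b x - M) / (2 * (a₀ - b))
  have hε : 0 < ε := div_pos (sub_pos.2 hx) (by linarith)
  have hεab : ε * (2 * (a₀ - b)) = u b x - M := div_mul_cancel₀ _ (by linarith)
  obtain ⟨x', hx'K, -⟩ := hKu b ⟨le_rfl, hb⟩ x
  obtain ⟨⟨c, z⟩, ⟨hc, hzK⟩, hmax⟩ := (isCompact_Icc.prod hK).exists_isMaxOn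
    ⟨(b, x'), left_mem_Icc.2 hb, hx'K⟩
    (hu.add ((continuous_const.mul continuous_fst).continuousOn))
  have hglobal : ∀ a ∈ Icc b a₀, ∀ y, u a y + ε * a ≤ u c z + ε * c := by
    intro a ha y
    obtain ⟨y', hy'K, hy'⟩ := hKu a ha y
    rw [← hy']
    exact hmax (mk_mem_prod ha hy'K)
  have hca : c < a₀ := by
    refine lt_of_le_of_ne hc.2 ?_
    rintro rfl
    have := hglobal b (left_mem_Icc.2 hb) x
    linarith [hM z]
  obtain ⟨D, hD, hDc⟩ := hderiv c ⟨hc.1, hca⟩ z fun y => by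
    linarith [hglobal c hc y]
  have hW : HasDerivWithinAt (fun a => u a z + ε * a) (D + ε) (Ici c) c := by
    simpa using hDc.fun_add ((hasDerivWithinAt_id c _).const_mul ε)
  have : D + ε ≤ 0 := hW.nonpos_of_isMaxOn_Icc hca fun a ha => by
    simpa using hglobal a ⟨hc.1.trans ha.1, ha.2⟩ z
  linarith

theorem le_of_hasDerivWithinAt_nonpos_of_isMin (hb : b ≤ a₀) (hK : IsCompact K)
    (hu : ContinuousOn (Function.uncurry u) (Icc b a₀ ×ˢ K))
    (hKu : ∀ a ∈ Icc b a₀, ∀ y, ∃ y' ∈ K, u a y' = u a y)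
    (hderiv : ∀ c ∈ Ico b a₀, ∀ x, (∀ y, u c x ≤ u c y) →
      ∃ D, D ≤ 0 ∧ HasDerivWithinAt (u · x) D (Ici c) c)
    (hM : ∀ y, M ≤ u a₀ y) (x : X) : M ≤ u b x := by
  have := le_of_hasDerivWithinAt_nonneg_of_isMax (u := fun a y => -u a y) (M := -M) hb hK hu.neg
    (fun a ha y => (hKu a ha y).imp fun y' => And.imp_right neg_inj.2)
    (fun c hc x hx =>
      let ⟨D, hD, hDc⟩ := hderiv c hc x fun y => neg_le_neg_iff.1 (hx y)
      ⟨-D, neg_nonneg.2 hD, hDc.neg⟩)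
    (fun y => neg_le_neg (hM y)) x
  exact neg_le_neg_iff.1 this

end MaximumPrinciple

def spatialTerm {n : ℕ} (f : EuclideanSpace ℝ (Fin n) → ℝ) (x : EuclideanSpace ℝ (Fin n)) : ℝ :=
  (3 / 2) * ‖gradient f x‖ ^ 2 / f x ^ 2 - lap f x / f x

section SpatialTerm

variable {n : ℕ} {f : EuclideanSpace ℝ (Fin n) → ℝ} {x : EuclideanSpace ℝ (Fin n)}

theorem spatialTerm_nonneg_of_isLocalMax (hf : ContDiff ℝ 2 f) (hfx : 0 ≤ f x)
    (hx : IsLocalMax f x) : 0 ≤ spatialTerm f x := by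
  have hlap : lap f x / f x ≤ 0 :=
    div_nonpos_of_nonpos_of_nonneg (lap_nonpos_of_isLocalMax hf hx) hfx
  have hgrad : 0 ≤ (3 / 2) * ‖gradient f x‖ ^ 2 / f x ^ 2 := by positivity
  rw [spatialTerm]
  linarith

theorem spatialTerm_nonpos_of_isLocalMin (hf : ContDiff ℝ 2 f) (hfx : 0 ≤ f x)
    (hx : IsLocalMin f x) : spatialTerm f x ≤ 0 := by
  have hgrad : gradient f x = 0 := by simp [gradient, hx.fderiv_eq_zero]
  have hlap : 0 ≤ lap f x / f x := div_nonneg (lap_nonneg_of_isLocalMin hf hx) hfx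
  simpa [spatialTerm, hgrad] using hlap

end SpatialTerm

section Primitive

variable {f : ℝ → ℝ} {a₁ a₀ : ℝ}

theorem continuousOn_primitive_Ioc (hf : ContinuousOn f (Ioc a₁ a₀)) :
    ContinuousOn (fun a => ∫ t in a₀..a, f t) (Ioc a₁ a₀) := by
  intro a ha
  obtain ⟨b, hb₁, hba⟩ := exists_between ha.1
  have hba₀ : b ≤ a₀ := hba.le.trans ha.2
  have hIcc : Icc b a₀ ⊆ Ioc a₁ a₀ := Icc_subset_Ioc_iff hba₀ |>.2 ⟨hb₁, le_rfl⟩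
  have hprim := intervalIntegral.continuousOn_primitive_interval'
    ((hf.mono hIcc).intervalIntegrable_of_Icc (μ := MeasureTheory.volume) hba₀) right_mem_uIcc
  rw [uIcc_of_le hba₀] at hprim
  refine (hprim a ⟨hba.le, ha.2⟩).mono_of_mem_nhdsWithin ?_
  exact mem_of_superset (inter_mem_nhdsWithin _ (Ioi_mem_nhds hba))
    fun t ht => ⟨le_of_lt ht.2, ht.1.2⟩

theorem hasDerivAt_primitive_of_continuousOn_Ioc (hf : ContinuousOn f (Ioc a₁ a₀)) {c : ℝ}
    (hc : c ∈ Ioo a₁ a₀) : HasDerivAt (fun a => ∫ t in a₀..a, f t) (f c) c := by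
  have hIoo : ContinuousOn f (Ioo a₁ a₀) := hf.mono Ioo_subset_Ioc_self
  refine intervalIntegral.integral_hasDerivAt_right ?_
    (hIoo.stronglyMeasurableAtFilter isOpen_Ioo c hc)
    (hIoo.continuousAt (Ioo_mem_nhds hc.1 hc.2))
  refine (hf.mono ?_).intervalIntegrable
  rw [uIcc_of_ge hc.2.le]
  exact Icc_subset_Ioc_iff hc.2.le |>.2 ⟨hc.1, le_rfl⟩

end Primitive

theorem hasDerivAt_mul_exp_neg_of_continuity_eq {m : ℕ} {h γ ζ : ℝ → ℝ} {c S : ℝ}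
    (hc : c ≠ 0) (hh : DifferentiableAt ℝ h c) (hζ : HasDerivAt ζ (-((m : ℝ) - 1) * (γ c / c)) c)
    (heq : c * deriv h c = -((m : ℝ) - 1) * γ c * h c + ((m : ℝ) - 2) / (2 * c ^ 2) * S) :
    HasDerivAt (fun t => h t * Real.exp (-ζ t))
      (Real.exp (-ζ c) * (((m : ℝ) - 2) / (2 * c ^ 2)) / c * S) c := by
  refine (hh.hasDerivAt.fun_mul hζ.fun_neg.exp).congr_deriv ?_
  field_simp at heq ⊢
  linear_combination heq

theorem iInf_mul_exp_le_and_le_iSup_mul_exp {n : ℕ} {K : Set (EuclideanSpace ℝ (Fin n))}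
    {a₁ a₀ : ℝ} {ρ : ℝ → EuclideanSpace ℝ (Fin n) → ℝ} {ζ : ℝ → ℝ} (hK : IsCompact K)
    (hKρ : ∀ a ∈ Ioc a₁ a₀, ∀ y, ∃ y' ∈ K, ρ a y' = ρ a y)
    (hρ : ContinuousOn (Function.uncurry ρ) (Ioc a₁ a₀ ×ˢ univ))
    (hζ : ContinuousOn ζ (Ioc a₁ a₀)) (hζ₀ : ζ a₀ = 0)
    (hnonneg : ∀ a ∈ Ioo a₁ a₀, ∀ x, 0 ≤ ρ a x)
    (hsmooth : ∀ a ∈ Ioo a₁ a₀, ContDiff ℝ 2 (ρ a))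
    (hderiv : ∀ c ∈ Ioo a₁ a₀, ∀ x, ∃ k, 0 ≤ k ∧
      HasDerivAt (fun a => ρ a x * Real.exp (-ζ a)) (k * spatialTerm (ρ c) x) c)
    {b : ℝ} (hb : b ∈ Ioc a₁ a₀) (x : EuclideanSpace ℝ (Fin n)) :
    (⨅ y, ρ a₀ y) * Real.exp (ζ b) ≤ ρ b x ∧ ρ b x ≤ (⨆ y, ρ a₀ y) * Real.exp (ζ b) := by
  have hIcc : Icc b a₀ ⊆ Ioc a₁ a₀ := Icc_subset_Ioc_iff hb.2 |>.2 ⟨hb.1, le_rfl⟩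
  have hIco : Ico b a₀ ⊆ Ioo a₁ a₀ := Ico_subset_Ioo_left hb.1
  have ha₀ : a₀ ∈ Ioc a₁ a₀ := hIcc (right_mem_Icc.2 hb.2)
  set u : ℝ → EuclideanSpace ℝ (Fin n) → ℝ := fun a y => ρ a y * Real.exp (-ζ a) with hu_def
  have hu : ContinuousOn (Function.uncurry u) (Icc b a₀ ×ˢ K) :=
    (hρ.mono (prod_mono hIcc (subset_univ K))).mul
      ((hζ.mono hIcc).comp continuousOn_fst fun p hp => hp.1).neg.rexp
  have hKu : ∀ a ∈ Icc b a₀, ∀ y, ∃ y' ∈ K, u a y' = u a y := fun a ha y =>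
    (hKρ a (hIcc ha) y).imp fun y' => And.imp_right (congrArg (· * Real.exp (-ζ a)))
  have hrange : range (ρ a₀) ⊆ ρ a₀ '' K := fun _ ⟨y, hy⟩ => hy ▸ hKρ a₀ ha₀ y
  have hbdd : IsCompact (ρ a₀ '' K) := hK.image_of_continuousOn
    (hρ.comp (continuousOn_const.prodMk continuousOn_id) fun y _ => ⟨ha₀, trivial⟩)
  have hu₀ : ∀ y, u a₀ y = ρ a₀ y := fun y => by simp [hu_def, hζ₀]
  have hmax : ∀ c ∈ Ico b a₀, ∀ z, (∀ y, u c y ≤ u c z) →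
      ∃ D, 0 ≤ D ∧ HasDerivWithinAt (u · z) D (Ici c) c := by
    intro c hc z hz
    obtain ⟨k, hk, hd⟩ := hderiv c (hIco hc) z
    have hz' : IsLocalMax (ρ c) z :=
      Eventually.of_forall fun y => (mul_le_mul_iff_left₀ (Real.exp_pos _)).1 (hz y)
    exact ⟨_, mul_nonneg hk (spatialTerm_nonneg_of_isLocalMax (hsmooth c (hIco hc))
      (hnonneg c (hIco hc) z) hz'), hd.hasDerivWithinAt⟩
  have hmin : ∀ c ∈ Ico b a₀, ∀ z, (∀ y, u c z ≤ u c y) →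
      ∃ D, D ≤ 0 ∧ HasDerivWithinAt (u · z) D (Ici c) c := by
    intro c hc z hz
    obtain ⟨k, hk, hd⟩ := hderiv c (hIco hc) z
    have hz' : IsLocalMin (ρ c) z :=
      Eventually.of_forall fun y => (mul_le_mul_iff_left₀ (Real.exp_pos _)).1 (hz y)
    exact ⟨_, mul_nonpos_of_nonneg_of_nonpos hk (spatialTerm_nonpos_of_isLocalMin
      (hsmooth c (hIco hc)) (hnonneg c (hIco hc) z) hz'), hd.hasDerivWithinAt⟩
  have hlow : (⨅ y, ρ a₀ y) ≤ ρ b x * Real.exp (-ζ b) :=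
    le_of_hasDerivWithinAt_nonpos_of_isMin hb.2 hK hu hKu hmin
      (fun y => (hu₀ y).symm ▸ ciInf_le (hbdd.bddBelow.mono hrange) y) x
  have hup : ρ b x * Real.exp (-ζ b) ≤ ⨆ y, ρ a₀ y :=
    le_of_hasDerivWithinAt_nonneg_of_isMax hb.2 hK hu hKu hmax
      (fun y => (hu₀ y).symm ▸ le_ciSup (hbdd.bddAbove.mono hrange) y) x
  rw [Real.exp_neg, ← div_eq_mul_inv] at hlow hup
  exact ⟨(le_div_iff₀ (Real.exp_pos _)).1 hlow, (div_le_iff₀ (Real.exp_pos _)).1 hup⟩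

theorem a_priori_bounds_scale_factor_general (m : ℕ) (hm : 3 ≤ m) (n : ℕ)
    (Γ : Subgroup (EuclideanSpace ℝ (Fin n) ≃ᵢ EuclideanSpace ℝ (Fin n)))
    (hΓ : CompactSpace (Quotient (MulAction.orbitRel Γ (EuclideanSpace ℝ (Fin n)))))
    (a₁ a₀ : ℝ) (ha₁ : 0 ≤ a₁)
    (γ : ℝ → ℝ) (hγ : ContinuousOn γ (Set.Ioc a₁ a₀))
    (ζ : ℝ → ℝ) (hζ : ∀ a ∈ Set.Ioc a₁ a₀, ζ a = -((m : ℝ) - 1) * ∫ t in a₀..a, γ t / t)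
    (ρ : ℝ → EuclideanSpace ℝ (Fin n) → ℝ)
    (hcont : ContinuousOn (fun p : ℝ × EuclideanSpace ℝ (Fin n) => ρ p.1 p.2)
      (Set.Ioc a₁ a₀ ×ˢ Set.univ))
    (hpos : ∀ a ∈ Set.Ioc a₁ a₀, ∀ x, 0 < ρ a x)
    (hsmooth : ContDiffOn ℝ (⊤ : ℕ∞) (fun p : ℝ × EuclideanSpace ℝ (Fin n) => ρ p.1 p.2)
      (Set.Ioo a₁ a₀ ×ˢ Set.univ))
    (hper : ∀ a ∈ Set.Ioc a₁ a₀, ∀ g : Γ, ∀ x, ρ a (g • x) = ρ a x)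
    (hpde : ∀ a ∈ Set.Ioo a₁ a₀, ∀ x,
      a * deriv (fun t => ρ t x) a =
        -((m : ℝ) - 1) * γ a * ρ a x +
          (((m : ℝ) - 2) / (2 * a ^ 2)) *
            ((3 / 2) * ‖gradient (ρ a) x‖ ^ 2 / (ρ a x) ^ 2 - lap (ρ a) x / ρ a x)) :
    ∀ a ∈ Set.Ioc a₁ a₀, ∀ x,
      ((⨅ y, ρ a₀ y) * Real.exp (ζ a) ≤ ρ a x) ∧
        (ρ a x ≤ (⨆ y, ρ a₀ y) * Real.exp (ζ a)) := by
  obtain ⟨K, hK, hKΓ⟩ := MulAction.exists_isCompact_forall_exists_smul_mem (G := Γ)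
    (T := EuclideanSpace ℝ (Fin n))
  have hm₂ : (0 : ℝ) ≤ (m : ℝ) - 2 := by
    have : (3 : ℝ) ≤ m := by exact_mod_cast hm
    linarith
  have hγt : ContinuousOn (fun t => γ t / t) (Ioc a₁ a₀) :=
    hγ.div continuousOn_id fun t ht => (ha₁.trans_lt ht.1).ne'
  have hζ' : ∀ c ∈ Ioo a₁ a₀, HasDerivAt ζ (-((m : ℝ) - 1) * (γ c / c)) c := fun c hc =>
    ((hasDerivAt_primitive_of_continuousOn_Ioc hγt hc).const_mul _).congr_of_eventuallyEq
      (eventually_of_mem (Ioo_mem_nhds hc.1 hc.2) fun t ht => hζ t (Ioo_subset_Ioc_self ht))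
  have hslice : ∀ a ∈ Ioo a₁ a₀, ContDiff ℝ 2 (ρ a) := fun a ha =>
    (contDiffOn_univ.1 (hsmooth.comp (contDiff_const.prodMk contDiff_id).contDiffOn
      fun _ _ => ⟨ha, trivial⟩)).of_le (WithTop.coe_le_coe.2 le_top)
  have htime : ∀ c ∈ Ioo a₁ a₀, ∀ x, DifferentiableAt ℝ (fun t => ρ t x) c := fun c hc x =>
    ((hsmooth.comp (contDiff_id.prodMk contDiff_const).contDiffOn fun _ ht => ⟨ht, trivial⟩)
      |>.contDiffAt (Ioo_mem_nhds hc.1 hc.2)).differentiableAt (by simp)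
  intro a ha x
  refine iInf_mul_exp_le_and_le_iSup_mul_exp hK
    (fun b hb y => let ⟨g, hg⟩ := hKΓ y; ⟨_, hg, hper b hb g y⟩) hcont
    ((continuousOn_const.mul (continuousOn_primitive_Ioc hγt)).congr hζ)
    (by simp [hζ a₀ ⟨ha.1.trans_le ha.2, le_rfl⟩])
    (fun b hb y => (hpos b (Ioo_subset_Ioc_self hb) y).le) hslice
    (fun c hc y => ⟨_, ?_, hasDerivAt_mul_exp_neg_of_continuity_eq (ha₁.trans_lt hc.1).ne'
      (htime c hc y) (hζ' c hc) (hpde c hc y)⟩) ha x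
  have hc₀ := ha₁.trans_lt hc.1
  positivity

/-- A priori bounds of Theorem 3.1 (ii): a positive periodic solution of the continuity
equation on `(a₁,a₀] × ℝⁿ` satisfies
`ρ₀^{min} e^{ζ(a)} ≤ ρ(a,x) ≤ ρ₀^{max} e^{ζ(a)}`, where `ρ₀ = ρ(a₀,·)` and
`ζ(a) = −(m−1)∫_{a₀}^a γ(a')/a' da'`. -/
theorem a_priori_bounds_scale_factor (m : ℕ) (hm : 3 ≤ m) (n : ℕ) (hn : n = m - 1)
    (Γ : Subgroup (EuclideanSpace ℝ (Fin n) ≃ᵢ EuclideanSpace ℝ (Fin n)))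
    (hΓ : CompactSpace (Quotient (MulAction.orbitRel Γ (EuclideanSpace ℝ (Fin n)))))
    (a₁ a₀ : ℝ) (ha₁ : 0 ≤ a₁) (ha : a₁ < a₀)
    (γ : ℝ → ℝ) (hγ : ContinuousOn γ (Set.Ioc a₁ a₀))
    (ζ : ℝ → ℝ) (hζ : ∀ a ∈ Set.Ioc a₁ a₀, ζ a = -((m : ℝ) - 1) * ∫ t in a₀..a, γ t / t)
    (ρ : ℝ → EuclideanSpace ℝ (Fin n) → ℝ)
    (hcont : ContinuousOn (fun p : ℝ × EuclideanSpace ℝ (Fin n) => ρ p.1 p.2)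
      (Set.Ioc a₁ a₀ ×ˢ Set.univ))
    (hpos : ∀ a ∈ Set.Ioc a₁ a₀, ∀ x, 0 < ρ a x)
    (hsmooth : ContDiffOn ℝ (⊤ : ℕ∞) (fun p : ℝ × EuclideanSpace ℝ (Fin n) => ρ p.1 p.2)
      (Set.Ioo a₁ a₀ ×ˢ Set.univ))
    (hper : ∀ a ∈ Set.Ioc a₁ a₀, ∀ g : Γ, ∀ x, ρ a (g • x) = ρ a x)
    (hpde : ∀ a ∈ Set.Ioo a₁ a₀, ∀ x,
      a * deriv (fun t => ρ t x) a =
        -((m : ℝ) - 1) * γ a * ρ a x +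
          (((m : ℝ) - 2) / (2 * a ^ 2)) *
            ((3 / 2) * ‖gradient (ρ a) x‖ ^ 2 / (ρ a x) ^ 2 - lap (ρ a) x / ρ a x)) :
    ∀ a ∈ Set.Ioc a₁ a₀, ∀ x,
      ((⨅ y, ρ a₀ y) * Real.exp (ζ a) ≤ ρ a x) ∧
        (ρ a x ≤ (⨆ y, ρ a₀ y) * Real.exp (ζ a)) :=
  a_priori_bounds_scale_factor_general m hm n Γ hΓ a₁ a₀ ha₁ γ hγ ζ hζ ρ hcont hpos hsmooth hper
    hpde
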